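/- arXiv:1401.6504 — 2 statements merged into one kernel-verified Lean document; each statement's English description precedes it below -/
import Mathlib

section
/- Let a ∈ ℝ^{q₂} and b ∈ ℝ^{q₁} maximize aᵀ S_{YX} b subject to aᵀ S_{YY} a = 1 and bᵀ S_{XX} b = 1, where S_{YY} and S_{XX} are positive definite. Then the optimal value aᵀ S_{YX} b equals the largest singular value of S_{YY}^{-1/2} S_{YX} S_{XX}^{-1/2}. -/
/-!
With `R`, `Q` the symmetric square roots of `S_YY`, `S_XX`, the substitution `u = R a`, `v = Q b`
turns the constraints into `‖u‖ = ‖v‖ = 1` and the objective into `⟪M v, u⟫` with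
`M = R⁻¹ S_YX Q⁻¹`. The supremum of `⟪M v, u⟫` over unit vectors is the operator norm of `M`.
-/

open Matrix

/-- The square root of a positive semidefinite matrix (as in Mathlib of December 2024). -/
noncomputable def Matrix.PosSemidef.sqrt {n 𝕜 : Type*} [Fintype n] [RCLike 𝕜] [PartialOrder 𝕜] [DecidableEq n]
    {A : Matrix n n 𝕜} (hA : A.PosSemidef) : Matrix n n 𝕜 :=
  hA.1.eigenvectorUnitary.1 * diagonal ((↑) ∘ Real.sqrt ∘ hA.1.eigenvalues) *
  (star hA.1.eigenvectorUnitary : Matrix n n 𝕜)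

open scoped RealInnerProductSpace

namespace Matrix.PosSemidef

variable {n : Type*} [Fintype n] [DecidableEq n] {A : Matrix n n ℝ}

theorem sqrt_mul_self (hA : A.PosSemidef) : hA.sqrt * hA.sqrt = A := by
  conv_rhs => rw [hA.1.spectral_theorem, Unitary.conjStarAlgAut_apply]
  have hU : (star hA.1.eigenvectorUnitary : Matrix n n ℝ) * hA.1.eigenvectorUnitary = 1 :=
    UnitaryGroup.star_mul_self _
  simp only [sqrt, Matrix.mul_assoc, ← Matrix.mul_assoc _ hA.1.eigenvectorUnitary.1, hU,
    Matrix.one_mul, ← Matrix.mul_assoc (diagonal _) (diagonal _), diagonal_mul_diagonal]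
  congr 3
  funext i
  simp [Real.mul_self_sqrt (hA.eigenvalues_nonneg i)]

theorem transpose_sqrt (hA : A.PosSemidef) : hA.sqrtᵀ = hA.sqrt := by
  simp [sqrt, transpose_mul, Matrix.mul_assoc, Matrix.star_eq_conjTranspose]

end Matrix.PosSemidef

theorem Matrix.PosDef.isUnit_det_sqrt {n : Type*} [Fintype n] [DecidableEq n]
    {A : Matrix n n ℝ} (hA : A.PosDef) : IsUnit hA.posSemidef.sqrt.det := by
  have hdet : hA.posSemidef.sqrt.det * hA.posSemidef.sqrt.det = A.det := by
    rw [← det_mul, hA.posSemidef.sqrt_mul_self]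
  exact isUnit_iff_ne_zero.mpr fun h0 => hA.det_pos.ne' (by rw [← hdet, h0, zero_mul])

theorem EuclideanSpace.norm_toLp_eq_one_iff {ι : Type*} [Fintype ι] (w : ι → ℝ) :
    ‖WithLp.toLp 2 w‖ = 1 ↔ w ⬝ᵥ w = 1 := by
  rw [← pow_eq_one_iff_of_nonneg (norm_nonneg _) two_ne_zero, ← real_inner_self_eq_norm_sq]
  rfl

theorem ContinuousLinearMap.opNorm_eq_of_isGreatest_inner {E F : Type*}
    [NormedAddCommGroup E] [InnerProductSpace ℝ E] [NormedAddCommGroup F] [InnerProductSpace ℝ F]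
    {T : E →L[ℝ] F} {c : ℝ}
    (h : IsGreatest {x | ∃ (v : E) (u : F), ‖v‖ = 1 ∧ ‖u‖ = 1 ∧ x = ⟪T v, u⟫} c) :
    ‖T‖ = c := by
  obtain ⟨⟨v, u, hv, hu, rfl⟩, hle⟩ := h
  have hneg : -⟪T v, u⟫ ≤ ⟪T v, u⟫ := by
    simpa using hle ⟨v, -u, hv, by rwa [norm_neg], rfl⟩
  refine le_antisymm (opNorm_le_of_re_inner_le (by linarith)
    fun x y hx hy => hle ⟨x, y, hx, hy, rfl⟩) ?_
  calc ⟪T v, u⟫ ≤ ‖T v‖ * ‖u‖ := real_inner_le_norm _ _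
    _ ≤ ‖T‖ * ‖v‖ * ‖u‖ := by gcongr; exact T.le_opNorm v
    _ = ‖T‖ := by rw [hv, hu, mul_one, mul_one]

theorem Matrix.dotProduct_transpose_mul_self_mulVec {n : Type*} [Fintype n] (R : Matrix n n ℝ)
    (x : n → ℝ) : x ⬝ᵥ (Rᵀ * R) *ᵥ x = R *ᵥ x ⬝ᵥ R *ᵥ x := by
  rw [← mulVec_mulVec, dotProduct_mulVec, vecMul_transpose]

section ChangeOfVariables

variable {m n : Type*} [Fintype m] [Fintype n] [DecidableEq m] [DecidableEq n]

theorem Matrix.dotProduct_mulVec_eq_of_isUnit_det (A : Matrix m n ℝ) {R : Matrix m m ℝ}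
    {Q : Matrix n n ℝ} (hR : IsUnit R.det) (hQ : IsUnit Q.det) (a : m → ℝ) (b : n → ℝ) :
    a ⬝ᵥ A *ᵥ b = R *ᵥ a ⬝ᵥ (Rᵀ⁻¹ * A * Q⁻¹) *ᵥ Q *ᵥ b := by
  rw [mulVec_mulVec, Matrix.mul_assoc _ Q⁻¹, nonsing_inv_mul _ hQ, Matrix.mul_one,
    ← mulVec_mulVec, dotProduct_mulVec (R *ᵥ a), ← transpose_nonsing_inv, vecMul_transpose,
    mulVec_mulVec, nonsing_inv_mul _ hR, one_mulVec]

theorem cca_values_eq_inner_values (A : Matrix m n ℝ) {R : Matrix m m ℝ} {Q : Matrix n n ℝ}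
    (hR : IsUnit R.det) (hQ : IsUnit Q.det) :
    {x : ℝ | ∃ (a : m → ℝ) (b : n → ℝ),
        a ⬝ᵥ (Rᵀ * R) *ᵥ a = 1 ∧ b ⬝ᵥ (Qᵀ * Q) *ᵥ b = 1 ∧ x = a ⬝ᵥ A *ᵥ b} =
      {x | ∃ (v : EuclideanSpace ℝ n) (u : EuclideanSpace ℝ m), ‖v‖ = 1 ∧ ‖u‖ = 1 ∧
        x = ⟪(toEuclideanLin (Rᵀ⁻¹ * A * Q⁻¹)).toContinuousLinearMap v, u⟫} := by
  ext x
  constructor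
  · rintro ⟨a, b, ha, hb, rfl⟩
    refine ⟨WithLp.toLp 2 (Q *ᵥ b), WithLp.toLp 2 (R *ᵥ a), ?_, ?_, ?_⟩
    · rwa [EuclideanSpace.norm_toLp_eq_one_iff, ← dotProduct_transpose_mul_self_mulVec]
    · rwa [EuclideanSpace.norm_toLp_eq_one_iff, ← dotProduct_transpose_mul_self_mulVec]
    · exact dotProduct_mulVec_eq_of_isUnit_det A hR hQ a b
  · rintro ⟨v, u, hv, hu, rfl⟩
    refine ⟨R⁻¹ *ᵥ u.ofLp, Q⁻¹ *ᵥ v.ofLp, ?_, ?_, ?_⟩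
    · rwa [dotProduct_transpose_mul_self_mulVec, mulVec_mulVec, mul_nonsing_inv _ hR, one_mulVec,
        ← EuclideanSpace.norm_toLp_eq_one_iff]
    · rwa [dotProduct_transpose_mul_self_mulVec, mulVec_mulVec, mul_nonsing_inv _ hQ, one_mulVec,
        ← EuclideanSpace.norm_toLp_eq_one_iff]
    · rw [dotProduct_mulVec_eq_of_isUnit_det A hR hQ, mulVec_mulVec _ R, mulVec_mulVec _ Q,
        mul_nonsing_inv _ hR, mul_nonsing_inv _ hQ, one_mulVec, one_mulVec]
      rfl

end ChangeOfVariables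

/-- If `a, b` maximize `aᵀ S_YX b` subject to `aᵀ S_YY a = 1`, `bᵀ S_XX b = 1`
with `S_YY`, `S_XX` positive definite, then the optimal value equals the largest
singular value (operator norm) of `S_YY^{-1/2} S_YX S_XX^{-1/2}`. -/
theorem cca_value_eq_largest_singular_value
    {q₁ q₂ : ℕ}
    (SYX : Matrix (Fin q₂) (Fin q₁) ℝ)
    (SYY : Matrix (Fin q₂) (Fin q₂) ℝ) (SXX : Matrix (Fin q₁) (Fin q₁) ℝ)
    (hYY : SYY.PosDef) (hXX : SXX.PosDef)
    (a : Fin q₂ → ℝ) (b : Fin q₁ → ℝ)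
    (hmax : IsGreatest {x : ℝ | ∃ (a' : Fin q₂ → ℝ) (b' : Fin q₁ → ℝ),
        a' ⬝ᵥ SYY *ᵥ a' = 1 ∧ b' ⬝ᵥ SXX *ᵥ b' = 1 ∧ x = a' ⬝ᵥ SYX *ᵥ b'}
        (a ⬝ᵥ SYX *ᵥ b)) :
    a ⬝ᵥ SYX *ᵥ b =
      ‖(Matrix.toEuclideanLin
          ((hYY.posSemidef.sqrt)⁻¹ * SYX * (hXX.posSemidef.sqrt)⁻¹)).toContinuousLinearMap‖ := by
  have hvalues := cca_values_eq_inner_values SYX hYY.isUnit_det_sqrt hXX.isUnit_det_sqrt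
  rw [PosSemidef.transpose_sqrt, PosSemidef.transpose_sqrt, PosSemidef.sqrt_mul_self,
    PosSemidef.sqrt_mul_self] at hvalues
  rw [hvalues] at hmax
  exact (ContinuousLinearMap.opNorm_eq_of_isGreatest_inner hmax).symm
end

section
/- Let M₁ and M₂ be disjoint finite nonempty sets of points in a Euclidean space with sizes n₁, n₂ and centroids m₁, m₂. Then Ward's distance (n₁n₂/(n₁+n₂))‖m₁ - m₂‖² equals (1/(2(n₁+n₂))) Σ_{i,j ∈ M₁∪M₂} ‖g_i - g_j‖² - (1/(2n₁)) Σ_{i,j ∈ M₁} ‖g_i - g_j‖² - (1/(2n₂)) Σ_{i,j ∈ M₂} ‖g_i - g_j‖². -/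
/-!
Expanding `‖g i - g j‖²` turns `(1 / 2n) ∑ᵢ ∑ⱼ ‖g i - g j‖²` into the within-cluster sum of
squares `∑ ‖g i‖² - n ‖m‖²`. The squared norms of the points cancel between the three terms,
leaving `n₁ ‖m₁‖² + n₂ ‖m₂‖² - (n₁ + n₂) ‖m‖²`, where the centroid `m` of the union is the
weighted mean of `m₁` and `m₂`; this equals `n₁ n₂ / (n₁ + n₂) ‖m₁ - m₂‖²`.
-/

open Finset

section

variable {ι E : Type*} [NormedAddCommGroup E] [InnerProductSpace ℝ E]

theorem sum_sum_norm_sub_sq (g : ι → E) (s : Finset ι) :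
    ∑ i ∈ s, ∑ j ∈ s, ‖g i - g j‖ ^ 2 =
      2 * #s * ∑ i ∈ s, ‖g i‖ ^ 2 - 2 * ‖∑ i ∈ s, g i‖ ^ 2 := by
  have sum_sum_inner : ∑ i ∈ s, ∑ j ∈ s, inner ℝ (g i) (g j) = ‖∑ i ∈ s, g i‖ ^ 2 := by
    rw [← real_inner_self_eq_norm_sq, sum_inner]
    simp only [inner_sum]
  simp only [norm_sub_sq_real, sum_add_distrib, sum_sub_distrib, sum_const, nsmul_eq_mul,
    ← mul_sum, sum_sum_inner]
  ring

theorem one_div_two_card_mul_sum_sum_norm_sub_sq (g : ι → E) (s : Finset ι) :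
    1 / (2 * (#s : ℝ)) * ∑ i ∈ s, ∑ j ∈ s, ‖g i - g j‖ ^ 2 =
      ∑ i ∈ s, ‖g i‖ ^ 2 - #s * ‖(#s : ℝ)⁻¹ • ∑ i ∈ s, g i‖ ^ 2 := by
  rcases s.eq_empty_or_nonempty with rfl | hs
  · simp
  have hcard : (0 : ℝ) < #s := by exact_mod_cast hs.card_pos
  rw [sum_sum_norm_sub_sq, norm_smul, Real.norm_eq_abs, abs_inv, abs_of_pos hcard]
  field_simp

theorem card_smul_inv_card_smul_sum (g : ι → E) (s : Finset ι) :
    (#s : ℝ) • ((#s : ℝ)⁻¹ • ∑ i ∈ s, g i) = ∑ i ∈ s, g i := by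
  rcases s.eq_empty_or_nonempty with rfl | hs
  · simp
  rw [smul_inv_smul₀ (by exact_mod_cast hs.card_pos.ne')]

theorem weighted_norm_sq_sub_norm_sq_weighted_mean {p q : ℝ} (hp : 0 ≤ p) (hq : 0 ≤ q)
    (x y : E) :
    p * ‖x‖ ^ 2 + q * ‖y‖ ^ 2 - (p + q) * ‖(p + q)⁻¹ • (p • x + q • y)‖ ^ 2 =
      p * q / (p + q) * ‖x - y‖ ^ 2 := by
  rcases (add_nonneg hp hq).eq_or_lt with hpq | hpq
  · obtain ⟨rfl, rfl⟩ : p = 0 ∧ q = 0 := ⟨by linarith, by linarith⟩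
    simp
  rw [norm_smul, Real.norm_eq_abs, abs_inv, abs_of_pos hpq, mul_pow, norm_add_sq_real,
    norm_sub_sq_real, norm_smul, norm_smul, real_inner_smul_left, real_inner_smul_right,
    Real.norm_eq_abs, Real.norm_eq_abs, abs_of_nonneg hp, abs_of_nonneg hq]
  field_simp
  ring

end

theorem ward_distance_eq_pairwise_sums_general
    {ι : Type*} [DecidableEq ι] {d : ℕ} (g : ι → EuclideanSpace ℝ (Fin d))
    (M₁ M₂ : Finset ι) (hdisj : Disjoint M₁ M₂)
    (n₁ n₂ : ℕ) (hn₁ : n₁ = M₁.card) (hn₂ : n₂ = M₂.card)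
    (m₁ m₂ : EuclideanSpace ℝ (Fin d))
    (hm₁ : m₁ = ((n₁ : ℝ)⁻¹) • ∑ i ∈ M₁, g i)
    (hm₂ : m₂ = ((n₂ : ℝ)⁻¹) • ∑ i ∈ M₂, g i) :
    ((n₁ : ℝ) * n₂ / (n₁ + n₂)) * ‖m₁ - m₂‖ ^ 2 =
      (1 / (2 * ((n₁ : ℝ) + n₂))) *
          ∑ i ∈ M₁ ∪ M₂, ∑ j ∈ M₁ ∪ M₂, ‖g i - g j‖ ^ 2
        - (1 / (2 * (n₁ : ℝ))) * ∑ i ∈ M₁, ∑ j ∈ M₁, ‖g i - g j‖ ^ 2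
        - (1 / (2 * (n₂ : ℝ))) * ∑ i ∈ M₂, ∑ j ∈ M₂, ‖g i - g j‖ ^ 2 := by
  have hcard : ((M₁ ∪ M₂).card : ℝ) = n₁ + n₂ := by
    rw [card_union_of_disjoint hdisj, hn₁, hn₂, Nat.cast_add]
  have hsum : ∑ i ∈ M₁ ∪ M₂, g i = (n₁ : ℝ) • m₁ + (n₂ : ℝ) • m₂ := by
    rw [sum_union hdisj, hm₁, hm₂, hn₁, hn₂, card_smul_inv_card_smul_sum,
      card_smul_inv_card_smul_sum]
  have hunion := one_div_two_card_mul_sum_sum_norm_sub_sq g (M₁ ∪ M₂)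
  rw [hcard, hsum, sum_union hdisj (f := fun i => ‖g i‖ ^ 2)] at hunion
  rw [hunion, hn₁, hn₂, one_div_two_card_mul_sum_sum_norm_sub_sq,
    one_div_two_card_mul_sum_sum_norm_sub_sq, ← hn₁, ← hn₂, ← hm₁, ← hm₂,
    ← weighted_norm_sq_sub_norm_sq_weighted_mean (Nat.cast_nonneg n₁) (Nat.cast_nonneg n₂)]
  ring

/-- Ward's distance identity: for disjoint nonempty finite clusters `M₁`, `M₂`
of points in Euclidean space, with sizes `n₁`, `n₂` and centroids `m₁`, `m₂`,
`(n₁n₂/(n₁+n₂)) ‖m₁ - m₂‖²` equals the pairwise squared-distance expression. -/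
theorem ward_distance_eq_pairwise_sums
    {ι : Type*} [DecidableEq ι] {d : ℕ} (g : ι → EuclideanSpace ℝ (Fin d))
    (M₁ M₂ : Finset ι) (hdisj : Disjoint M₁ M₂)
    (h₁ : M₁.Nonempty) (h₂ : M₂.Nonempty)
    (n₁ n₂ : ℕ) (hn₁ : n₁ = M₁.card) (hn₂ : n₂ = M₂.card)
    (m₁ m₂ : EuclideanSpace ℝ (Fin d))
    (hm₁ : m₁ = ((n₁ : ℝ)⁻¹) • ∑ i ∈ M₁, g i)
    (hm₂ : m₂ = ((n₂ : ℝ)⁻¹) • ∑ i ∈ M₂, g i) :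
    ((n₁ : ℝ) * n₂ / (n₁ + n₂)) * ‖m₁ - m₂‖ ^ 2 =
      (1 / (2 * ((n₁ : ℝ) + n₂))) *
          ∑ i ∈ M₁ ∪ M₂, ∑ j ∈ M₁ ∪ M₂, ‖g i - g j‖ ^ 2
        - (1 / (2 * (n₁ : ℝ))) * ∑ i ∈ M₁, ∑ j ∈ M₁, ‖g i - g j‖ ^ 2
        - (1 / (2 * (n₂ : ℝ))) * ∑ i ∈ M₂, ∑ j ∈ M₂, ‖g i - g j‖ ^ 2 :=
  ward_distance_eq_pairwise_sums_general g M₁ M₂ hdisj n₁ n₂ hn₁ hn₂ m₁ m₂ hm₁ hm₂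
end
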